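/- arXiv:1011.2008 — 2 statements merged into one kernel-verified Lean document; each statement's English description precedes it below -/
import Mathlib

section
/- There exist constants C₁ = C₁(m) > 0 and C₂ = C₂(m) > 0 such that: for every ρ > 0, ε ∈ (0,1), δ ∈ (0,1), every m-dimensional linear subspace V of ℝⁿ, and every ρεδ-basis (v₁,…,v_m) of V, if (v̂₁,…,v̂_m) is the ortho-ρ-normal basis arising from (v₁,…,v_m) by the Gram–Schmidt process, then |v_i − v̂_i| ≤ (C₁·ε + C₂·δ)·ρ for every i = 1,…,m. -/
open Metric MeasureTheory Filter
open scoped RealInnerProductSpace ENNReal NNReal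

noncomputable section

abbrev Euc (n : ℕ) := EuclideanSpace ℝ (Fin n)

variable {n : ℕ}

/-- Orthogonal projection onto a subspace, as a continuous linear map on the whole space. -/
noncomputable def projCLM (U : Submodule ℝ (Euc n)) : Euc n →L[ℝ] Euc n :=
  U.subtypeL.comp (U.orthogonalProjectionOnto)

/-- Orthogonal projection onto the orthogonal complement. -/
noncomputable def QCLM (U : Submodule ℝ (Euc n)) : Euc n →L[ℝ] Euc n :=
  projCLM Uᗮ

/-- The metric on the Grassmannian: operator norm distance of orthogonal projections. -/
noncomputable def dG (U V : Submodule ℝ (Euc n)) : ℝ :=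
  ‖projCLM U - projCLM V‖

/-- The cone with axis `Hᗮ` and "angle" `δ`. -/
def angCone (δ : ℝ) (H : Submodule ℝ (Euc n)) : Set (Euc n) :=
  {x | δ * ‖x‖ ≤ ‖QCLM H x‖}

/-- The shell (n-annulus) of radii `r` and `R`. -/
def shell (r R : ℝ) : Set (Euc n) :=
  Metric.ball (0 : Euc n) R \ Metric.closedBall (0 : Euc n) r

/-- Conical cap: intersection of a cone and a shell. -/
def conicalCap (δ : ℝ) (H : Submodule ℝ (Euc n)) (r R : ℝ) : Set (Euc n) :=
  angCone δ H ∩ shell r R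

/-- Symmetrized Hausdorff-type distance: sum of the two one-sided deviations. -/
noncomputable def hDistSum (A B : Set (Euc n)) : ℝ :=
  (⨆ y : A, Metric.infDist (y : Euc n) B) + (⨆ y : B, Metric.infDist (y : Euc n) A)

/-- Jones β-number (closed-ball version). -/
noncomputable def betaBar (m : ℕ) (S : Set (Euc n)) (x : Euc n) (r : ℝ) : ℝ :=
  (1/r) * ⨅ H : {H : Submodule ℝ (Euc n) // Module.finrank ℝ H = m},
    ⨆ z : ↥(S ∩ Metric.closedBall x r), ‖QCLM H.1 ((z : Euc n) - x)‖

/-- Jones β-number (open-ball version). -/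
noncomputable def betaOpen (m : ℕ) (S : Set (Euc n)) (x : Euc n) (r : ℝ) : ℝ :=
  (1/r) * ⨅ H : {H : Submodule ℝ (Euc n) // Module.finrank ℝ H = m},
    ⨆ z : ↥(S ∩ Metric.ball x r), ‖QCLM H.1 ((z : Euc n) - x)‖

/-- Reifenberg θ-number (closed-ball version). -/
noncomputable def thetaBar (m : ℕ) (S : Set (Euc n)) (x : Euc n) (r : ℝ) : ℝ :=
  (1/r) * ⨅ H : {H : Submodule ℝ (Euc n) // Module.finrank ℝ H = m},
    hDistSum (S ∩ Metric.closedBall x r)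
      ((fun v => x + v) '' (H.1 : Set (Euc n)) ∩ Metric.closedBall x r)

/-- Reifenberg θ-number (open-ball version). -/
noncomputable def thetaOpen (m : ℕ) (S : Set (Euc n)) (x : Euc n) (r : ℝ) : ℝ :=
  (1/r) * ⨅ H : {H : Submodule ℝ (Euc n) // Module.finrank ℝ H = m},
    hDistSum (S ∩ Metric.ball x r)
      ((fun v => x + v) '' (H.1 : Set (Euc n)) ∩ Metric.ball x r)

/-- Discrete Menger-type curvature of an `(m+2)`-tuple of points. -/
noncomputable def discCurv (m : ℕ) (x : Fin (m+2) → Euc n) : ℝ :=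
  (μH[((m : ℝ) + 1)] (convexHull ℝ (Set.range x))).toReal / Metric.diam (Set.range x) ^ (m+2)

/-- Iterated lower integral over `k` copies of a measure. -/
noncomputable def multiLIntegral (μ : Measure (Euc n)) :
    (k : ℕ) → ((Fin k → Euc n) → ℝ≥0∞) → ℝ≥0∞
  | 0, f => f Fin.elim0
  | k+1, f => ∫⁻ x, multiLIntegral μ k (fun v => f (Fin.cons x v)) ∂μ

/-- The `p`-energy of a set: the integral of `K^p` over `(m+2)`-tuples of points of `S`,
with respect to the `m`-dimensional Hausdorff measure restricted to `S`. -/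
noncomputable def energy (m : ℕ) (p : ℝ) (S : Set (Euc n)) : ℝ≥0∞ :=
  multiLIntegral ((μH[(m : ℝ)]).restrict S) (m+2) fun x => ENNReal.ofReal (discCurv m x ^ p)

/-- The class `V_k(η,d)` of `(η,d)`-voluminous `(k+1)`-simplices. -/
def IsVol (k : ℕ) (η d : ℝ) (x : Fin (k+2) → Euc n) : Prop :=
  (∃ c : Euc n, convexHull ℝ (Set.range x) ⊆ Metric.closedBall c d) ∧
  ENNReal.ofReal ((η * d) ^ k) ≤
    μH[(k : ℝ)] (convexHull ℝ (Set.range fun i : Fin (k+1) => x i.castSucc)) ∧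
  η * d ≤ Metric.infDist (x (Fin.last (k+1)))
    (affineSpan ℝ (Set.range fun i : Fin (k+1) => x i.castSucc) : Set (Euc n))

/-- Pseudo-distance between two simplices given by vertex tuples. -/
noncomputable def simplexDist (k : ℕ) (x y : Fin (k+2) → Euc n) : ℝ :=
  ⨅ σ : Equiv.Perm (Fin (k+2)), ⨆ i, dist (x i) (y (σ i))

/-- Best approximating `m`-planes for `S` in the closed ball `B̄(x,r)`. -/
def BAP (m : ℕ) (S : Set (Euc n)) (x : Euc n) (r : ℝ) : Set (Submodule ℝ (Euc n)) :=
  {H | Module.finrank ℝ H = m ∧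
    hDistSum (S ∩ Metric.closedBall x r)
      ((fun v => x + v) '' (H : Set (Euc n)) ∩ Metric.closedBall x r) ≤ r * thetaBar m S x r}

/-- `m`-fine sets with constants `A`, `R`, `M`. -/
def IsFine (m : ℕ) (S : Set (Euc n)) (A R M : ℝ) : Prop :=
  IsCompact S ∧ 0 < A ∧ 0 < R ∧ 2 ≤ M ∧
  (∀ x ∈ S, ∀ r : ℝ, 0 < r → r ≤ R →
    ENNReal.ofReal (A * r ^ m) ≤ μH[(m : ℝ)] (S ∩ Metric.ball x r)) ∧
  (∀ x ∈ S, ∀ r : ℝ, 0 < r → r ≤ R → thetaBar m S x r ≤ M * betaBar m S x r)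

/-- `T` is the (m-dimensional) tangent plane of `S` at `x`: the limit in the Grassmannian
metric of best approximating planes as the scale tends to `0`. -/
def IsTangentAt (m : ℕ) (S : Set (Euc n)) (x : Euc n) (T : Submodule ℝ (Euc n)) : Prop :=
  Module.finrank ℝ T = m ∧
  ∀ ε > 0, ∃ r₀ > 0, ∀ r : ℝ, 0 < r → r ≤ r₀ → ∀ H ∈ BAP m S x r, dG T H ≤ ε

/-- Gram–Schmidt orthonormalization (Mathlib's `gramSchmidtNormed`). -/
noncomputable def gsNormed {n m : ℕ} (v : Fin m → Euc n) : Fin m → Euc n :=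
  @InnerProductSpace.gramSchmidtNormed ℝ (Euc n) _ _ _ (Fin m) inferInstance inferInstance (inferInstance : WellFoundedLT (Fin m)) v

/-!
Let `w = gramSchmidt v` and `s = ε + δ`. The defect `v i - w i` is the sum of the projections of
`v i` onto the earlier `w j`; as long as `w j` is close to `v j`, such a projection has length at
most `2 s ρ + 4 ‖v j - w j‖`, because `⟪w j, v i⟫` is close to `⟪v j, v i⟫` and `‖w j‖ ≥ ρ / 2`.
Strong induction then gives `‖v i - w i‖ ≤ 7 ^ i s ρ` as long as `7 ^ m s ≤ 1 / 4`, and rescaling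
`w i` to length `ρ` costs at most `‖v i - w i‖ + |‖v i‖ - ρ|` more. For larger `s` the trivial
bound `3 ρ` suffices.
-/

open InnerProductSpace Finset

lemma norm_sub_smul_inv_norm_smul_self_le {F : Type*} [NormedAddCommGroup F] [NormedSpace ℝ F]
    (y : F) (ρ : ℝ) : ‖y - ρ • (‖y‖⁻¹ • y)‖ ≤ |‖y‖ - ρ| := by
  rcases eq_or_ne y 0 with rfl | hy
  · simp
  have hy' : ‖y‖ ≠ 0 := norm_ne_zero_iff.mpr hy
  have : y - ρ • (‖y‖⁻¹ • y) = (‖y‖ - ρ) • (‖y‖⁻¹ • y) := by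
    rw [sub_smul, smul_smul ‖y‖, mul_inv_cancel₀ hy', one_smul]
  rw [this, norm_smul, norm_smul, norm_inv, norm_norm, inv_mul_cancel₀ hy', Real.norm_eq_abs,
    mul_one]

lemma norm_sub_smul_inv_norm_smul_le {F : Type*} [NormedAddCommGroup F] [NormedSpace ℝ F]
    (x y : F) (ρ : ℝ) : ‖x - ρ • (‖y‖⁻¹ • y)‖ ≤ 2 * ‖x - y‖ + |‖x‖ - ρ| := by
  have hyx : |‖y‖ - ‖x‖| ≤ ‖x - y‖ := by
    rw [norm_sub_rev x y]; exact abs_norm_sub_norm_le y x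
  calc ‖x - ρ • (‖y‖⁻¹ • y)‖ ≤ ‖x - y‖ + ‖y - ρ • (‖y‖⁻¹ • y)‖ :=
        norm_sub_le_norm_sub_add_norm_sub _ _ _
    _ ≤ ‖x - y‖ + |‖y‖ - ρ| := by gcongr; exact norm_sub_smul_inv_norm_smul_self_le y ρ
    _ ≤ ‖x - y‖ + (|‖y‖ - ‖x‖| + |‖x‖ - ρ|) := by gcongr; exact abs_sub_le _ _ _
    _ ≤ 2 * ‖x - y‖ + |‖x‖ - ρ| := by linarith

lemma sum_range_two_add_four_mul_seven_pow_le (N : ℕ) :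
    ∑ k ∈ range N, ((2 : ℝ) + 4 * 7 ^ k) ≤ 7 ^ N := by
  induction N with
  | zero => simp
  | succ N ih =>
    have : (1 : ℝ) ≤ 7 ^ N := one_le_pow₀ (by norm_num)
    rw [sum_range_succ, pow_succ]
    linarith

section GramSchmidt

variable {E : Type*} [NormedAddCommGroup E] [InnerProductSpace ℝ E]

lemma norm_inner_div_norm_sq_smul (u x : E) : ‖(⟪u, x⟫ / ‖u‖ ^ 2) • u‖ = |⟪u, x⟫| / ‖u‖ := by
  rcases eq_or_ne u 0 with rfl | hu
  · simp
  have hu' : ‖u‖ ≠ 0 := norm_ne_zero_iff.mpr hu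
  rw [norm_smul, Real.norm_eq_abs, abs_div, abs_pow, abs_norm]
  field_simp

lemma abs_inner_div_norm_le_of_norm_sub_le {u x y : E} {s ρ a : ℝ} (hρ : 0 < ρ) (hs : s ≤ 1 / 4)
    (ha : a ≤ ρ / 4) (hyx : |⟪y, x⟫| ≤ s * ρ ^ 2) (hx : ‖x‖ ≤ 2 * ρ) (hy : (1 - s) * ρ ≤ ‖y‖)
    (hyu : ‖y - u‖ ≤ a) : |⟪u, x⟫| / ‖u‖ ≤ 2 * s * ρ + 4 * a := by
  have ha0 : 0 ≤ a := (norm_nonneg _).trans hyu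
  have hu : ρ / 2 ≤ ‖u‖ := by
    have := norm_sub_norm_le y u
    nlinarith
  have hux : |⟪u, x⟫| ≤ s * ρ ^ 2 + a * (2 * ρ) := by
    have hsplit : ⟪u, x⟫ = ⟪y, x⟫ - ⟪y - u, x⟫ := by rw [inner_sub_left]; ring
    have hdiff : |⟪y - u, x⟫| ≤ a * (2 * ρ) :=
      (abs_real_inner_le_norm _ _).trans (mul_le_mul hyu hx (norm_nonneg _) (by linarith))
    rw [hsplit]
    exact (abs_sub _ _).trans (add_le_add hyx hdiff)
  calc |⟪u, x⟫| / ‖u‖ ≤ (s * ρ ^ 2 + a * (2 * ρ)) / (ρ / 2) :=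
        div_le_div₀ ((abs_nonneg _).trans hux) hux (by positivity) hu
    _ = 2 * s * ρ + 4 * a := by field_simp; ring

lemma sub_gramSchmidt_eq_sum {ι : Type*} [LinearOrder ι] [LocallyFiniteOrderBot ι]
    [WellFoundedLT ι] (v : ι → E) (i : ι) :
    v i - gramSchmidt ℝ v i = ∑ j ∈ Iio i,
      (⟪gramSchmidt ℝ v j, v i⟫ / ‖gramSchmidt ℝ v j‖ ^ 2) • gramSchmidt ℝ v j :=
  sub_eq_of_eq_add' (gramSchmidt_def'' ℝ v i)

lemma norm_sub_gramSchmidt_le {m : ℕ} {v : Fin m → E} {s ρ : ℝ} (hρ : 0 < ρ) (hs0 : 0 ≤ s)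
    (hs : 7 ^ m * s ≤ 1 / 4) (hlow : ∀ i, (1 - s) * ρ ≤ ‖v i‖) (hup : ∀ i, ‖v i‖ ≤ 2 * ρ)
    (hinner : ∀ i j, i ≠ j → |⟪v i, v j⟫| ≤ s * ρ ^ 2) (i : Fin m) :
    ‖v i - gramSchmidt ℝ v i‖ ≤ 7 ^ (i : ℕ) * s * ρ := by
  induction i using WellFoundedLT.induction with
  | _ i ih =>
  set w := gramSchmidt ℝ v
  have hs4 : s ≤ 1 / 4 := le_trans (le_mul_of_one_le_left hs0 (one_le_pow₀ (by norm_num))) hs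
  have hterm : ∀ j ∈ Iio i, |⟪w j, v i⟫| / ‖w j‖ ≤ (2 + 4 * 7 ^ (j : ℕ)) * s * ρ := by
    intro j hj
    have hji : j < i := mem_Iio.mp hj
    have h7 : (7 : ℝ) ^ (j : ℕ) * s * ρ ≤ ρ / 4 := by
      have : (7 : ℝ) ^ (j : ℕ) * s ≤ 7 ^ m * s :=
        mul_le_mul_of_nonneg_right (pow_le_pow_right₀ (by norm_num) j.isLt.le) hs0
      nlinarith
    calc |⟪w j, v i⟫| / ‖w j‖ ≤ 2 * s * ρ + 4 * (7 ^ (j : ℕ) * s * ρ) :=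
          abs_inner_div_norm_le_of_norm_sub_le hρ hs4 h7 (hinner j i hji.ne) (hup i) (hlow j)
            (ih j hji)
      _ = (2 + 4 * 7 ^ (j : ℕ)) * s * ρ := by ring
  calc ‖v i - w i‖ ≤ ∑ j ∈ Iio i, ‖(⟪w j, v i⟫ / ‖w j‖ ^ 2) • w j‖ := by
        rw [sub_gramSchmidt_eq_sum]; exact norm_sum_le _ _
    _ ≤ ∑ j ∈ Iio i, (2 + 4 * 7 ^ (j : ℕ)) * s * ρ := by
        simp only [norm_inner_div_norm_sq_smul]; exact sum_le_sum hterm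
    _ = (∑ k ∈ range i, ((2 : ℝ) + 4 * 7 ^ k)) * s * ρ := by
        rw [← sum_mul, ← sum_mul, ← Nat.Iio_eq_range, ← Fin.map_valEmbedding_Iio, sum_map]
        rfl
    _ ≤ 7 ^ (i : ℕ) * s * ρ := by gcongr; exact sum_range_two_add_four_mul_seven_pow_le _

end GramSchmidt

theorem statement1_general (m : ℕ) :
    ∃ C₁ > (0:ℝ), ∃ C₂ > (0:ℝ), ∀ (n : ℕ), m < n →
    ∀ ρ ε δ : ℝ, 0 < ρ → ε ∈ Set.Ioo (0:ℝ) 1 → δ ∈ Set.Ioo (0:ℝ) 1 →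
    ∀ V : Submodule ℝ (Euc n), Module.finrank ℝ V = m →
    ∀ v : Fin m → Euc n,
      LinearIndependent ℝ v → Submodule.span ℝ (Set.range v) = V →
      (∀ i, (1 - ε) * ρ ≤ ‖v i‖ ∧ ‖v i‖ ≤ (1 + ε) * ρ) →
      (∀ i j, i ≠ j → |(inner ℝ (v i) (v j) : ℝ)| ≤ δ * ρ ^ 2) →
      ∀ i, ‖v i - ρ • gsNormed v i‖ ≤ (C₁ * ε + C₂ * δ) * ρ := by
  refine ⟨12 * 7 ^ m, by positivity, 12 * 7 ^ m, by positivity, ?_⟩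
  rintro n - ρ ε δ hρ ⟨hε0, hε1⟩ ⟨hδ0, -⟩ V - v hli - hnorm hinner i
  rw [show (12 * 7 ^ m * ε + 12 * 7 ^ m * δ) * ρ = 12 * 7 ^ m * (ε + δ) * ρ by ring]
  have hup : ∀ j, ‖v j‖ ≤ 2 * ρ := fun j => by nlinarith [hnorm j]
  rcases le_or_gt (7 ^ m * (ε + δ)) (1 / 4) with hs | hs
  · have hclose : ‖v i - gramSchmidt ℝ v i‖ ≤ 7 ^ m * (ε + δ) * ρ :=
      (norm_sub_gramSchmidt_le hρ (by positivity) hs (fun j => by nlinarith [hnorm j]) hup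
        (fun j k hjk => (hinner j k hjk).trans (by gcongr; linarith)) i).trans
        (by gcongr; exacts [by norm_num, i.isLt.le])
    have hvi : |‖v i‖ - ρ| ≤ 7 ^ m * (ε + δ) * ρ := by
      have h7 : ε ≤ 7 ^ m * (ε + δ) := by
        nlinarith [one_le_pow₀ (M₀ := ℝ) (a := 7) (n := m) (by norm_num)]
      rw [abs_le]
      constructor <;> nlinarith [hnorm i]
    calc ‖v i - ρ • gsNormed v i‖ ≤ 2 * ‖v i - gramSchmidt ℝ v i‖ + |‖v i‖ - ρ| :=
          norm_sub_smul_inv_norm_smul_le _ _ ρ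
      _ ≤ 12 * 7 ^ m * (ε + δ) * ρ := by linarith [abs_nonneg (‖v i‖ - ρ)]
  · calc ‖v i - ρ • gsNormed v i‖ ≤ ‖v i‖ + ‖ρ • gsNormed v i‖ := norm_sub_le _ _
      _ = ‖v i‖ + ρ := by
          rw [norm_smul, gsNormed, gramSchmidtNormed_unit_length i hli, Real.norm_of_nonneg hρ.le,
            mul_one]
      _ ≤ 12 * 7 ^ m * (ε + δ) * ρ := by linarith [hup i, mul_lt_mul_of_pos_right hs hρ]

/-- Gram–Schmidt applied to a ρεδ-basis moves each vector
by at most `(C₁ ε + C₂ δ) ρ`, for constants depending only on `m`. -/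
theorem statement1 (m : ℕ) (hm : 0 < m) :
    ∃ C₁ > (0:ℝ), ∃ C₂ > (0:ℝ), ∀ (n : ℕ), m < n →
    ∀ ρ ε δ : ℝ, 0 < ρ → ε ∈ Set.Ioo (0:ℝ) 1 → δ ∈ Set.Ioo (0:ℝ) 1 →
    ∀ V : Submodule ℝ (Euc n), Module.finrank ℝ V = m →
    ∀ v : Fin m → Euc n,
      LinearIndependent ℝ v → Submodule.span ℝ (Set.range v) = V →
      (∀ i, (1 - ε) * ρ ≤ ‖v i‖ ∧ ‖v i‖ ≤ (1 + ε) * ρ) →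
      (∀ i j, i ≠ j → |(inner ℝ (v i) (v j) : ℝ)| ≤ δ * ρ ^ 2) →
      ∀ i, ‖v i - ρ • gsNormed v i‖ ≤ (C₁ * ε + C₂ * δ) * ρ :=
  statement1_general m
end
end

section
/- There exists ε₀ = ε₀(m) > 0 such that for all ε, δ ∈ (0, ε₀) there exists a constant C₄ = C₄(m, ε, δ) > 0 with the following property: for every ρ > 0 and ϑ ∈ (0,1), every m-dimensional linear subspace V of ℝⁿ with a ρεδ-basis (v₁,…,v_m), and every m-dimensional linear subspace U of ℝⁿ with a basis (u₁,…,u_m) satisfying |u_i − v_i| ≤ ϑ·ρ for all i = 1,…,m, one has d_G(U,V) ≤ C₄·ϑ. -/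
open Metric MeasureTheory Filter
open scoped RealInnerProductSpace ENNReal NNReal

noncomputable section

variable {n : ℕ}

/-! Once `ε, δ < 1 / (4 (m + 1))`, the Gram matrix of the `vᵢ` is diagonally dominant, so
`‖∑ aᵢ vᵢ‖ ≥ (ρ / 2) |a|`. Moving every `vᵢ` by at most `ϑρ` moves `∑ aᵢ vᵢ` by at most
`√m ϑρ |a|` (Cauchy–Schwarz), so for `ϑ ≤ 1 / (4 √(m + 1))` also `‖∑ aᵢ uᵢ‖ ≥ (ρ / 4) |a|`.
Hence every `x ∈ U` lies within `O(√m ϑ) ‖x‖` of `V` and vice versa, and such a two-sided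
approximation bounds `‖π_U - π_V‖`: split `π_U - π_V = π_U (1 - π_V) - (1 - π_U) π_V`.
For larger `ϑ` the trivial bound `d_G ≤ 2` suffices. -/

namespace Submodule

variable {E : Type*} [NormedAddCommGroup E] [InnerProductSpace ℝ E]

theorem norm_sub_starProjection_le (K : Submodule ℝ E) [K.HasOrthogonalProjection] (x : E)
    {w : E} (hw : w ∈ K) : ‖x - K.starProjection x‖ ≤ ‖x - w‖ := by
  rw [starProjection_minimal]
  exact ciInf_le ⟨0, by rintro _ ⟨y, rfl⟩; exact norm_nonneg _⟩ (⟨w, hw⟩ : K)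

theorem norm_starProjection_le_of_mem_orthogonal {U V : Submodule ℝ E}
    [U.HasOrthogonalProjection] {a : ℝ} (ha : 0 ≤ a) (hUV : ∀ x ∈ U, ∃ w ∈ V, ‖x - w‖ ≤ a * ‖x‖)
    {y : E} (hy : y ∈ Vᗮ) : ‖U.starProjection y‖ ≤ a * ‖y‖ := by
  set p := U.starProjection y
  obtain ⟨w, hwV, hw⟩ := hUV p (U.starProjection_apply_mem y)
  have hpy : ⟪y - p, p⟫ = 0 := U.starProjection_inner_eq_zero y p (U.starProjection_apply_mem y)
  have hwy : ⟪w, y⟫ = 0 := V.inner_right_of_mem_orthogonal hwV hy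
  have hp : ‖p‖ * ‖p‖ ≤ a * ‖y‖ * ‖p‖ :=
    calc ‖p‖ * ‖p‖ = ⟪p - w, y⟫ := by
          rw [inner_sub_left] at hpy
          rw [inner_sub_left, hwy, sub_zero, real_inner_comm, ← real_inner_self_eq_norm_mul_norm]
          linarith
      _ ≤ ‖p - w‖ * ‖y‖ := real_inner_le_norm _ _
      _ ≤ a * ‖p‖ * ‖y‖ := by gcongr
      _ = a * ‖y‖ * ‖p‖ := by ring
  rcases (norm_nonneg p).eq_or_lt with hp0 | hp0
  · rw [← hp0]; positivity
  · exact le_of_mul_le_mul_right hp hp0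

end Submodule

theorem projCLM_eq_starProjection {n : ℕ} (U : Submodule ℝ (Euc n)) :
    projCLM U = U.starProjection :=
  rfl

theorem dG_le_two {n : ℕ} (U V : Submodule ℝ (Euc n)) : dG U V ≤ 2 := by
  refine (norm_sub_le _ _).trans ?_
  rw [projCLM_eq_starProjection, projCLM_eq_starProjection]
  linarith [U.starProjection_norm_le, V.starProjection_norm_le]

theorem dG_le_add {n : ℕ} {U V : Submodule ℝ (Euc n)} {a b : ℝ} (ha : 0 ≤ a) (hb : 0 ≤ b)
    (hUV : ∀ x ∈ U, ∃ w ∈ V, ‖x - w‖ ≤ a * ‖x‖)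
    (hVU : ∀ y ∈ V, ∃ w ∈ U, ‖y - w‖ ≤ b * ‖y‖) :
    dG U V ≤ a + b := by
  refine ContinuousLinearMap.opNorm_le_bound _ (add_nonneg ha hb) fun x => ?_
  rw [projCLM_eq_starProjection, projCLM_eq_starProjection]
  set q := V.starProjection x
  have hsplit : (U.starProjection - V.starProjection) x
      = U.starProjection (x - q) - (q - U.starProjection q) := by
    rw [sub_apply, map_sub]; abel
  have h₁ : ‖U.starProjection (x - q)‖ ≤ a * ‖x‖ :=
    calc ‖U.starProjection (x - q)‖ ≤ a * ‖x - q‖ :=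
          U.norm_starProjection_le_of_mem_orthogonal ha hUV (V.sub_starProjection_mem_orthogonal x)
      _ ≤ a * ‖x‖ := by
          gcongr
          simpa using V.norm_sub_starProjection_le x V.zero_mem
  have h₂ : ‖q - U.starProjection q‖ ≤ b * ‖x‖ := by
    obtain ⟨w, hwU, hw⟩ := hVU q (V.starProjection_apply_mem x)
    calc ‖q - U.starProjection q‖ ≤ ‖q - w‖ := U.norm_sub_starProjection_le q hwU
      _ ≤ b * ‖q‖ := hw
      _ ≤ b * ‖x‖ := by gcongr; exact V.norm_starProjection_apply_le x
  rw [hsplit, add_mul]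
  exact (norm_sub_le _ _).trans (add_le_add h₁ h₂)

theorem sqrt_sum_norm_sub_sq_le {E ι : Type*} [SeminormedAddCommGroup E] [Fintype ι]
    {u v : ι → E} {θ : ℝ} (hθ : 0 ≤ θ) (huv : ∀ i, ‖u i - v i‖ ≤ θ) :
    √(∑ i, ‖u i - v i‖ ^ 2) ≤ √(Fintype.card ι) * θ := by
  rw [← Real.sqrt_sq hθ, ← Real.sqrt_mul (Nat.cast_nonneg _)]
  refine Real.sqrt_le_sqrt ?_
  calc ∑ i, ‖u i - v i‖ ^ 2 ≤ ∑ _i : ι, θ ^ 2 :=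
        Finset.sum_le_sum fun i _ => pow_le_pow_left₀ (norm_nonneg _) (huv i) 2
    _ = Fintype.card ι * θ ^ 2 := by simp

section Frames

variable {E : Type*} [NormedAddCommGroup E] [InnerProductSpace ℝ E] {ι : Type*} [Fintype ι]

theorem mul_sum_sq_le_norm_sum_smul_sq {v : ι → E} {α β : ℝ} (hβ : 0 ≤ β)
    (hdiag : ∀ i, α ≤ ‖v i‖ ^ 2) (hoff : ∀ i j, i ≠ j → |⟪v i, v j⟫| ≤ β) (b : ι → ℝ) :
    (α - (Fintype.card ι - 1) * β) * ∑ i, b i ^ 2 ≤ ‖∑ i, b i • v i‖ ^ 2 := by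
  classical
  have hterm : ∀ i j, -(β * (|b i| * |b j|)) + (if i = j then (α + β) * b i ^ 2 else 0)
      ≤ b i * b j * ⟪v i, v j⟫ := by
    intro i j
    split_ifs with hij
    · subst hij
      rw [real_inner_self_eq_norm_sq, abs_mul_abs_self]
      nlinarith [hdiag i, sq_nonneg (b i)]
    · have h := mul_le_mul_of_nonneg_left (hoff i j hij)
        (mul_nonneg (abs_nonneg (b i)) (abs_nonneg (b j)))
      have h' := neg_abs_le (b i * b j * ⟪v i, v j⟫)
      rw [abs_mul, abs_mul] at h'
      linarith
  have hexpand : ‖∑ i, b i • v i‖ ^ 2 = ∑ i, ∑ j, b i * b j * ⟪v i, v j⟫ := by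
    rw [← real_inner_self_eq_norm_sq, sum_inner]
    refine Finset.sum_congr rfl fun i _ => ?_
    rw [inner_sum]
    refine Finset.sum_congr rfl fun j _ => ?_
    rw [real_inner_smul_left, real_inner_smul_right]; ring
  have hcs : (∑ i, |b i|) ^ 2 ≤ Fintype.card ι * ∑ i, b i ^ 2 := by
    simpa [sq_abs] using sq_sum_le_card_mul_sum_sq (s := Finset.univ) (f := fun i => |b i|)
  have hsum : ∑ i, ∑ j, (-(β * (|b i| * |b j|)) + if i = j then (α + β) * b i ^ 2 else 0)
      = -(β * (∑ i, |b i|) ^ 2) + (α + β) * ∑ i, b i ^ 2 := by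
    rw [sq, Finset.sum_mul_sum]
    simp only [Finset.sum_add_distrib, Finset.sum_neg_distrib, Finset.sum_ite_eq,
      Finset.mem_univ, if_true, Finset.mul_sum]
  rw [hexpand]
  refine le_trans ?_ (Finset.sum_le_sum fun i _ => Finset.sum_le_sum fun j _ => hterm i j)
  rw [hsum]
  nlinarith [mul_le_mul_of_nonneg_left hcs hβ]

theorem norm_sum_smul_sub_sum_smul_le (u v : ι → E) (a : ι → ℝ) :
    ‖∑ i, a i • u i - ∑ i, a i • v i‖ ≤ √(∑ i, a i ^ 2) * √(∑ i, ‖u i - v i‖ ^ 2) := by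
  rw [← Finset.sum_sub_distrib]
  calc ‖∑ i, (a i • u i - a i • v i)‖ ≤ ∑ i, ‖a i • (u i - v i)‖ := by
        simp only [smul_sub]; exact norm_sum_le _ _
    _ = ∑ i, |a i| * ‖u i - v i‖ := by simp only [norm_smul, Real.norm_eq_abs]
    _ ≤ √(∑ i, |a i| ^ 2) * √(∑ i, ‖u i - v i‖ ^ 2) := Real.sum_mul_le_sqrt_mul_sqrt _ _ _
    _ = √(∑ i, a i ^ 2) * √(∑ i, ‖u i - v i‖ ^ 2) := by simp only [sq_abs]

theorem sub_mul_sqrt_sum_sq_le_norm_sum_smul {u v : ι → E} {c : ℝ}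
    (hv : ∀ a : ι → ℝ, c * √(∑ i, a i ^ 2) ≤ ‖∑ i, a i • v i‖) (a : ι → ℝ) :
    (c - √(∑ i, ‖u i - v i‖ ^ 2)) * √(∑ i, a i ^ 2) ≤ ‖∑ i, a i • u i‖ := by
  have := norm_sum_smul_sub_sum_smul_le u v a
  have := norm_sub_norm_le (∑ i, a i • v i) (∑ i, a i • u i)
  rw [norm_sub_rev] at this
  nlinarith [hv a]

theorem exists_mem_span_norm_sub_le {u v : ι → E} {c : ℝ} (hc : 0 < c)
    (hu : ∀ a : ι → ℝ, c * √(∑ i, a i ^ 2) ≤ ‖∑ i, a i • u i‖)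
    {x : E} (hx : x ∈ Submodule.span ℝ (Set.range u)) :
    ∃ w ∈ Submodule.span ℝ (Set.range v), ‖x - w‖ ≤ √(∑ i, ‖u i - v i‖ ^ 2) / c * ‖x‖ := by
  obtain ⟨a, rfl⟩ := (Submodule.mem_span_range_iff_exists_fun ℝ).mp hx
  refine ⟨∑ i, a i • v i, Submodule.sum_mem _ fun i _ =>
    Submodule.smul_mem _ _ (Submodule.subset_span ⟨i, rfl⟩), ?_⟩
  rw [div_mul_eq_mul_div, le_div_iff₀ hc]
  calc ‖∑ i, a i • u i - ∑ i, a i • v i‖ * c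
      ≤ √(∑ i, a i ^ 2) * √(∑ i, ‖u i - v i‖ ^ 2) * c := by
        gcongr; exact norm_sum_smul_sub_sum_smul_le u v a
    _ ≤ √(∑ i, ‖u i - v i‖ ^ 2) * ‖∑ i, a i • u i‖ := by
        nlinarith [hu a, Real.sqrt_nonneg (∑ i, ‖u i - v i‖ ^ 2)]

theorem half_mul_sqrt_sum_sq_le_norm_sum_smul {v : ι → E} {ε δ ρ : ℝ} (hρ : 0 ≤ ρ)
    (hε : ε ≤ 1 / 4) (hδ : 0 ≤ δ) (hδι : (Fintype.card ι + 1) * δ ≤ 1 / 4)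
    (hvn : ∀ i, (1 - ε) * ρ ≤ ‖v i‖) (hvo : ∀ i j, i ≠ j → |⟪v i, v j⟫| ≤ δ * ρ ^ 2)
    (a : ι → ℝ) : ρ / 2 * √(∑ i, a i ^ 2) ≤ ‖∑ i, a i • v i‖ := by
  have hgram := mul_sum_sq_le_norm_sum_smul_sq (by positivity)
    (fun i => pow_le_pow_left₀ (by nlinarith) (hvn i) 2) hvo a
  have hcoef : (1 / 4 : ℝ) ≤ (1 - ε) ^ 2 - (Fintype.card ι - 1) * δ := by nlinarith
  rw [← sq_le_sq₀ (by positivity) (norm_nonneg _), mul_pow, Real.sq_sqrt (by positivity)]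
  refine le_trans ?_ hgram
  gcongr
  nlinarith [mul_le_mul_of_nonneg_left hcoef (sq_nonneg ρ)]

end Frames

theorem dG_span_le {n : ℕ} {ι : Type*} [Fintype ι] {u v : ι → Euc n} {c c' : ℝ}
    (hc : 0 < c) (hc' : 0 < c')
    (hu : ∀ a : ι → ℝ, c * √(∑ i, a i ^ 2) ≤ ‖∑ i, a i • u i‖)
    (hv : ∀ a : ι → ℝ, c' * √(∑ i, a i ^ 2) ≤ ‖∑ i, a i • v i‖) :
    dG (Submodule.span ℝ (Set.range u)) (Submodule.span ℝ (Set.range v))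
      ≤ √(∑ i, ‖u i - v i‖ ^ 2) / c + √(∑ i, ‖u i - v i‖ ^ 2) / c' := by
  have hsymm : ∑ i, ‖v i - u i‖ ^ 2 = ∑ i, ‖u i - v i‖ ^ 2 :=
    Finset.sum_congr rfl fun i _ => by rw [norm_sub_rev]
  refine dG_le_add (by positivity) (by positivity)
    (fun x hx => exists_mem_span_norm_sub_le hc hu hx) (fun y hy => ?_)
  rw [← hsymm]
  exact exists_mem_span_norm_sub_le hc' hv hy

theorem statement3_general (m : ℕ) :
    ∃ ε₀ : ℝ, 0 < ε₀ ∧ ε₀ ≤ 1 ∧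
    ∀ ε δ : ℝ, ε ∈ Set.Ioo 0 ε₀ → δ ∈ Set.Ioo 0 ε₀ →
    ∃ C₄ > (0:ℝ), ∀ (n : ℕ), m < n →
    ∀ ρ ϑ : ℝ, 0 < ρ → ϑ ∈ Set.Ioo (0:ℝ) 1 →
    ∀ (U V : Submodule ℝ (Euc n)),
      Module.finrank ℝ U = m → Module.finrank ℝ V = m →
    ∀ v u : Fin m → Euc n,
      LinearIndependent ℝ v → Submodule.span ℝ (Set.range v) = V →
      (∀ i, (1 - ε) * ρ ≤ ‖v i‖ ∧ ‖v i‖ ≤ (1 + ε) * ρ) →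
      (∀ i j, i ≠ j → |(inner ℝ (v i) (v j) : ℝ)| ≤ δ * ρ ^ 2) →
      LinearIndependent ℝ u → Submodule.span ℝ (Set.range u) = U →
      (∀ i, ‖u i - v i‖ ≤ ϑ * ρ) →
      dG U V ≤ C₄ * ϑ := by
  have hm_nonneg : (0 : ℝ) ≤ m := m.cast_nonneg
  refine ⟨1 / (4 * (m + 1)), by positivity, by rw [div_le_one (by positivity)]; linarith,
    fun ε δ hε hδ => ⟨8 * √(m + 1), by positivity, ?_⟩⟩
  intro n _ ρ ϑ hρ hϑ U V _ _ v u _ hV hvn hvo _ hU huv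
  subst hU hV
  have hε' := (lt_div_iff₀ (by positivity)).mp hε.2
  have hδ' := (lt_div_iff₀ (by positivity)).mp hδ.2
  have hv := half_mul_sqrt_sum_sq_le_norm_sum_smul hρ.le (by nlinarith) hδ.1.le
    (by rw [Fintype.card_fin]; linarith) (fun i => (hvn i).1) hvo
  have hϑρ : 0 ≤ ϑ * ρ := mul_nonneg hϑ.1.le hρ.le
  set D := √(∑ i, ‖u i - v i‖ ^ 2)
  have hD : D ≤ √(m + 1) * (ϑ * ρ) := (sqrt_sum_norm_sub_sq_le hϑρ huv).trans <| by
    rw [Fintype.card_fin]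
    exact mul_le_mul_of_nonneg_right (Real.sqrt_le_sqrt (by linarith)) hϑρ
  rcases le_or_gt (4 * √(m + 1) * ϑ) 1 with hsmall | hlarge
  · have hDρ : D ≤ ρ / 4 := by nlinarith
    have hu : ∀ a : Fin m → ℝ, ρ / 4 * √(∑ i, a i ^ 2) ≤ ‖∑ i, a i • u i‖ := fun a =>
      le_trans (by gcongr; linarith) (sub_mul_sqrt_sum_sq_le_norm_sum_smul hv a)
    calc dG _ _ ≤ D / (ρ / 4) + D / (ρ / 2) := dG_span_le (by positivity) (by positivity) hu hv
      _ = 6 * D / ρ := by field_simp; ring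
      _ ≤ 8 * √(m + 1) * ϑ := by
          rw [div_le_iff₀ hρ]
          nlinarith [mul_nonneg (Real.sqrt_nonneg (m + 1 : ℝ)) hϑρ]
  · calc dG _ _ ≤ 2 := dG_le_two _ _
      _ ≤ 8 * √(m + 1) * ϑ := by linarith

/-- comparing a ρεδ-basis of `V` with a nearby basis of `U`
controls the Grassmannian distance. -/
theorem statement3 (m : ℕ) (hm : 0 < m) :
    ∃ ε₀ : ℝ, 0 < ε₀ ∧ ε₀ ≤ 1 ∧
    ∀ ε δ : ℝ, ε ∈ Set.Ioo 0 ε₀ → δ ∈ Set.Ioo 0 ε₀ →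
    ∃ C₄ > (0:ℝ), ∀ (n : ℕ), m < n →
    ∀ ρ ϑ : ℝ, 0 < ρ → ϑ ∈ Set.Ioo (0:ℝ) 1 →
    ∀ (U V : Submodule ℝ (Euc n)),
      Module.finrank ℝ U = m → Module.finrank ℝ V = m →
    ∀ v u : Fin m → Euc n,
      LinearIndependent ℝ v → Submodule.span ℝ (Set.range v) = V →
      (∀ i, (1 - ε) * ρ ≤ ‖v i‖ ∧ ‖v i‖ ≤ (1 + ε) * ρ) →
      (∀ i j, i ≠ j → |(inner ℝ (v i) (v j) : ℝ)| ≤ δ * ρ ^ 2) →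
      LinearIndependent ℝ u → Submodule.span ℝ (Set.range u) = U →
      (∀ i, ‖u i - v i‖ ≤ ϑ * ρ) →
      dG U V ≤ C₄ * ϑ :=
  statement3_general m
end
end
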